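/- arXiv:2510.25059 — 2 statements merged into one kernel-verified Lean document; each statement's English description precedes it below -/
import Mathlib

section
/- Let q be a complex number with [m] ≠ 0 for all positive integers m. For positive integers n ≥ k ≥ 1, qbinom(n,k)/[k] = ∑_{n_1=k}^{n} q^{(n-n_1)k}/[n_1] · qbinom(n_1,k). -/
noncomputable def qint (q : ℂ) (m : ℕ) : ℂ := ∑ i ∈ Finset.range m, q ^ i

noncomputable def qfact (q : ℂ) : ℕ → ℂ
  | 0 => 1
  | n + 1 => qint q (n + 1) * qfact q n

noncomputable def qbinom (q : ℂ) (n k : ℕ) : ℂ :=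
  if k ≤ n then qfact q n / (qfact q k * qfact q (n - k)) else 0

lemma qint_succ (q : ℂ) (m : ℕ) : qint q (m + 1) = qint q m + q ^ m :=
  Finset.sum_range_succ _ _

lemma qint_add (q : ℂ) (a b : ℕ) : qint q (a + b) = qint q a + q ^ a * qint q b := by
  induction b with
  | zero => simp [qint]
  | succ b ih =>
      rw [← Nat.add_assoc, qint_succ, ih, qint_succ, pow_add]
      ring

lemma qfact_ne_zero (q : ℂ) (hm : ∀ m : ℕ, 1 ≤ m → qint q m ≠ 0) (n : ℕ) :
    qfact q n ≠ 0 := by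
  induction n with
  | zero => simp [qfact]
  | succ n ih =>
      simp only [qfact]
      exact mul_ne_zero (hm (n + 1) (by omega)) ih

theorem qbinom_div_qint (q : ℂ) (hm : ∀ m : ℕ, 1 ≤ m → qint q m ≠ 0)
    (n k : ℕ) (hk : 1 ≤ k) (hkn : k ≤ n) :
    qbinom q n k / qint q k =
      ∑ n₁ ∈ Finset.Icc k n, q ^ ((n - n₁) * k) / qint q n₁ * qbinom q n₁ k := by
  induction n, hkn using Nat.le_induction with
  | base =>
      simp [qbinom, Finset.Icc_self, qfact,
        div_self (qfact_ne_zero q hm k), one_div]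
  | succ n hkn ih =>
      rw [Finset.sum_Icc_succ_top (by omega : k ≤ n + 1)]
      have hrw : ∀ n₁ ∈ Finset.Icc k n,
          q ^ ((n + 1 - n₁) * k) / qint q n₁ * qbinom q n₁ k
            = q ^ k * (q ^ ((n - n₁) * k) / qint q n₁ * qbinom q n₁ k) := by
        intro n₁ hn₁
        simp only [Finset.mem_Icc] at hn₁
        have : (n + 1 - n₁) * k = k + (n - n₁) * k := by
          rw [Nat.succ_sub hn₁.2, Nat.succ_mul]; ring
        rw [this, pow_add]; ring
      rw [Finset.sum_congr rfl hrw, ← Finset.mul_sum, ← ih]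
      have h1 : k ≤ n + 1 := by omega
      have hs : n + 1 - k = (n - k) + 1 := by omega
      simp only [qbinom, if_pos hkn, if_pos h1, hs, Nat.sub_self, Nat.zero_mul, pow_zero]
      have hq1 : qint q (n + 1) = qint q k + q ^ k * qint q (n - k + 1) := by
        have : n + 1 = k + (n - k + 1) := by omega
        rw [this, qint_add]
      show qfact q (n + 1) / (qfact q k * qfact q (n - k + 1)) / qint q k =
        q ^ k * (qfact q n / (qfact q k * qfact q (n - k)) / qint q k) +
        (1 : ℂ) / qint q (n + 1) * (qfact q (n + 1) / (qfact q k * qfact q (n - k + 1)))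
      have e1 : qfact q (n + 1) = qint q (n + 1) * qfact q n := rfl
      have e2 : qfact q (n - k + 1) = qint q (n - k + 1) * qfact q (n - k) := rfl
      rw [e1, e2, hq1]
      have h2 := hm k hk
      have h3 := hm (n - k + 1) (by omega)
      have h4 : qint q k + q ^ k * qint q (n - k + 1) ≠ 0 := by rw [← hq1]; exact hm (n + 1) (by omega)
      have h5 := qfact_ne_zero q hm k
      have h6 := qfact_ne_zero q hm n
      have h7 := qfact_ne_zero q hm (n - k)
      field_simp
      ring
end

section
/- For a single variable t, a positive integer s, a positive integer n, and commuting variables x, y in ℂ[t,x,y]: ∑_{k=1}^n C(n,k) x^k y^{n-k} ∑_{k ≥ m ≥ 1} t^m/m^s equals ∑_{n ≥ n_1 ≥ ... ≥ n_s ≥ 1} (x+y)^{n-n_1} y^{n_1-n_s} ((t x+y)^{n_s} - y^{n_s}) / (n_1 ··· n_s). -/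
/-- Weakly decreasing chains `hi ≥ f 0 ≥ f 1 ≥ ⋯ ≥ f (d-1) ≥ lo`. -/
def chainsIcc (d lo hi : ℕ) : Finset (Fin d → ℕ) :=
  (Fintype.piFinset fun _ : Fin d => Finset.Icc lo hi).filter
    fun f => ∀ i j : Fin d, i ≤ j → f j ≤ f i

/-- `idx f j` is the paper's `n_j` (1-indexed entry of the chain `f`). -/
def idx {w : ℕ} (f : Fin w → ℕ) (j : ℕ) : ℕ :=
  if h : j - 1 < w then f ⟨j - 1, h⟩ else 0

open Finset

lemma mem_chainsIcc {d lo hi : ℕ} {f : Fin d → ℕ} :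
    f ∈ chainsIcc d lo hi ↔ (∀ i, f i ∈ Finset.Icc lo hi) ∧
      ∀ i j : Fin d, i ≤ j → f j ≤ f i := by
  simp [chainsIcc, Fintype.mem_piFinset]

section lemmas
variable {A : Type*} [CommRing A] [Algebra ℚ A]

/-- cons decomposition of sums over chains. -/
lemma sum_chains_succ (d lo hi : ℕ) (W : (Fin (d+1) → ℕ) → A) :
    ∑ f ∈ chainsIcc (d+1) lo hi, W f
      = ∑ u ∈ Finset.Icc lo hi, ∑ g ∈ chainsIcc d lo u, W (Fin.cons u g) := by
  rw [Finset.sum_sigma']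
  refine (Finset.sum_nbij' (i := fun p : Σ _ : ℕ, (Fin d → ℕ) => Fin.cons p.1 p.2)
    (j := fun f => ⟨f 0, Fin.tail f⟩) ?_ ?_ ?_ ?_ ?_).symm
  · rintro ⟨u, g⟩ hp
    simp only [Finset.mem_sigma] at hp
    obtain ⟨hu, hg⟩ := hp
    rw [mem_chainsIcc] at hg ⊢
    simp only [Finset.mem_Icc] at hu ⊢
    constructor
    · intro i
      refine Fin.cases ?_ ?_ i
      · simpa using hu
      · intro j
        simp only [Fin.cons_succ]
        have := (hg.1 j)
        simp only [Finset.mem_Icc] at this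
        omega
    · intro i j hij
      cases i using Fin.cases with
      | zero =>
        cases j using Fin.cases with
        | zero => simp
        | succ j' =>
          simp only [Fin.cons_succ, Fin.cons_zero]
          have := (hg.1 j')
          simp only [Finset.mem_Icc] at this
          omega
      | succ i' =>
        cases j using Fin.cases with
        | zero => exact absurd hij (by simp [Fin.le_def])
        | succ j' =>
          simp only [Fin.cons_succ]
          exact hg.2 i' j' (Fin.succ_le_succ_iff.mp hij)
  · intro f hf
    rw [mem_chainsIcc] at hf
    simp only [Finset.mem_sigma]
    constructor
    · exact hf.1 0
    · rw [mem_chainsIcc]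
      constructor
      · intro i
        have h1 := hf.1 i.succ
        have h2 := hf.2 0 i.succ (by simp [Fin.le_def])
        simp only [Finset.mem_Icc, Fin.tail] at *
        omega
      · intro i j hij
        exact hf.2 i.succ j.succ (Fin.succ_le_succ_iff.mpr hij)
  · rintro ⟨u, g⟩ _
    simp only [Fin.cons_zero, Fin.tail_cons]
  · intro f _
    exact Fin.cons_self_tail f
  · rintro ⟨u, g⟩ _
    rfl

/-- swap of triangular double sums -/
lemma sum_Icc_swap (n : ℕ) (g : ℕ → ℕ → A) :
    ∑ u ∈ Finset.Icc 1 n, ∑ k ∈ Finset.Icc 1 u, g u k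
      = ∑ k ∈ Finset.Icc 1 n, ∑ u ∈ Finset.Icc k n, g u k := by
  have h1 : ∀ u ∈ Finset.Icc 1 n, ∑ k ∈ Finset.Icc 1 u, g u k
      = ∑ k ∈ Finset.Icc 1 n, if k ≤ u then g u k else 0 := by
    intro u hu
    simp only [Finset.mem_Icc] at hu
    rw [← Finset.sum_filter]
    apply Finset.sum_congr _ (fun _ _ => rfl)
    ext k
    simp only [Finset.mem_filter, Finset.mem_Icc]
    omega
  rw [Finset.sum_congr rfl h1, Finset.sum_comm]
  refine Finset.sum_congr rfl fun k hk => ?_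
  simp only [Finset.mem_Icc] at hk
  rw [← Finset.sum_filter]
  apply Finset.sum_congr _ (fun _ _ => rfl)
  ext u
  simp only [Finset.mem_filter, Finset.mem_Icc]
  omega

/-- the poly F, recursive form -/
noncomputable def Fpoly (a b : A) : ℕ → ℕ → A
  | 0, m => a ^ m - b ^ m
  | (d+1), m => ∑ u ∈ Finset.Icc 1 m, ((u : ℚ))⁻¹ • (b ^ (m - u) * Fpoly a b d u)

lemma sum_inv_mul_choose (k : ℕ) : ∀ m : ℕ,
    ∑ u ∈ Finset.Icc (k+1) m, ((u : ℚ))⁻¹ * (u.choose (k+1) : ℚ)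
      = ((k+1 : ℕ) : ℚ)⁻¹ * (m.choose (k+1) : ℚ) := by
  intro m
  induction m with
  | zero => simp [Nat.choose_eq_zero_of_lt]
  | succ m ih =>
    by_cases h : k + 1 ≤ m + 1
    · rw [Finset.sum_Icc_succ_top h, ih]
      have hp : (m+1) * m.choose k = (m+1).choose (k+1) * (k+1) := Nat.add_one_mul_choose_eq m k
      have hp' : ((m:ℚ)+1) * (m.choose k : ℚ) = ((m+1).choose (k+1) : ℚ) * ((k:ℚ)+1) := by
        exact_mod_cast congrArg (Nat.cast : ℕ → ℚ) hp
      have hpascal : ((m+1).choose (k+1) : ℚ) = (m.choose k : ℚ) + (m.choose (k+1) : ℚ) := by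
        exact_mod_cast congrArg (Nat.cast : ℕ → ℚ) (Nat.choose_succ_succ m k)
      have hk : ((k:ℚ)+1) ≠ 0 := by positivity
      have hm : ((m:ℚ)+1) ≠ 0 := by positivity
      have h3 : ((m:ℚ)+1)⁻¹ * ((m+1).choose (k+1) : ℚ) = ((k:ℚ)+1)⁻¹ * (m.choose k : ℚ) := by
        rw [inv_mul_eq_div, inv_mul_eq_div, div_eq_div_iff hm hk]
        linear_combination -hp'
      push_cast
      rw [h3, hpascal]
      ring
    · rw [Finset.Icc_eq_empty (by omega), Nat.choose_eq_zero_of_lt (by omega)]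
      simp

lemma nat_q_smul (k : ℕ) (z : A) : ((k : ℚ)) • z = (k : A) * z := by
  rw [Nat.cast_smul_eq_nsmul, nsmul_eq_mul]

/-- closed form of Fpoly -/
lemma Fpoly_closed (a b : A) (d : ℕ) : ∀ m : ℕ,
    Fpoly a b d m = ∑ k ∈ Finset.Icc 1 m,
      (((m.choose k : ℚ)) / ((k : ℚ))^d) • ((a - b)^k * b^(m-k)) := by
  induction d with
  | zero =>
    intro m
    show a ^ m - b ^ m = _
    have expand : a ^ m
        = (∑ k ∈ Finset.Icc 1 m, (a-b)^k * b^(m-k) * (m.choose k : A)) + b^m := by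
      conv_lhs => rw [show a = (a-b)+b by ring, add_pow]
      rw [Finset.sum_range_succ']
      congr 1
      · rw [show Finset.Icc 1 m = Finset.Ico 1 (m+1) by rw [Finset.Ico_add_one_right_eq_Icc],
          Finset.sum_Ico_eq_sum_range]
        simp only [Nat.add_sub_cancel]
        exact Finset.sum_congr rfl fun i _ => by rw [Nat.add_comm 1 i]
      · simp
    rw [expand]
    rw [add_sub_cancel_right]
    refine Finset.sum_congr rfl fun k _ => ?_
    rw [pow_zero, div_one, nat_q_smul]
    ring
  | succ d ih =>
    intro m
    show (∑ u ∈ Finset.Icc 1 m, ((u : ℚ))⁻¹ • (b ^ (m - u) * Fpoly a b d u)) = _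
    have step : ∀ u ∈ Finset.Icc 1 m, ((u : ℚ))⁻¹ • (b ^ (m - u) * Fpoly a b d u)
        = ∑ k ∈ Finset.Icc 1 u,
            (((u:ℚ))⁻¹ * ((u.choose k : ℚ) / ((k:ℚ))^d)) • ((a-b)^k * b^(m-k)) := by
      intro u hu
      simp only [Finset.mem_Icc] at hu
      rw [ih u, Finset.mul_sum, Finset.smul_sum]
      refine Finset.sum_congr rfl fun k hk => ?_
      simp only [Finset.mem_Icc] at hk
      rw [mul_smul_comm, smul_smul]
      congr 1
      rw [show m - k = (m-u)+(u-k) by omega, pow_add]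
      ring
    rw [Finset.sum_congr rfl step, sum_Icc_swap]
    refine Finset.sum_congr rfl fun k hk => ?_
    simp only [Finset.mem_Icc] at hk
    rw [← Finset.sum_smul]
    congr 1
    obtain ⟨k, rfl⟩ : ∃ k', k = k' + 1 := ⟨k - 1, by omega⟩
    have key := sum_inv_mul_choose k m
    calc ∑ u ∈ Finset.Icc (k+1) m, ((u:ℚ))⁻¹ * ((u.choose (k+1) : ℚ) / ((k+1:ℕ):ℚ)^d)
        = (∑ u ∈ Finset.Icc (k+1) m, ((u:ℚ))⁻¹ * (u.choose (k+1) : ℚ))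
            * (((k+1:ℕ):ℚ)^d)⁻¹ := by
          rw [Finset.sum_mul]
          exact Finset.sum_congr rfl fun u _ => by rw [div_eq_mul_inv]; ring
      _ = ((m.choose (k+1) : ℚ)) / ((k+1:ℕ):ℚ)^(d+1) := by
          rw [key, div_eq_mul_inv, pow_succ, mul_inv]
          ring

end lemmas

section more
variable {A : Type*} [CommRing A] [Algebra ℚ A]

def lastD {e : ℕ} (g : Fin e → ℕ) (dflt : ℕ) : ℕ :=
  if h : e - 1 < e then g ⟨e - 1, h⟩ else dflt

lemma lastD_pos {e : ℕ} (g : Fin (e+1) → ℕ) (dflt : ℕ) :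
    lastD g dflt = g ⟨e, e.lt_succ_self⟩ := by
  have h : e + 1 - 1 < e + 1 := by omega
  simp only [lastD, dif_pos h]
  congr 1

lemma lastD_zero (g : Fin 0 → ℕ) (dflt : ℕ) : lastD g dflt = dflt := by
  simp only [lastD]
  rw [dif_neg (by omega)]

lemma lastD_cons {e : ℕ} (u : ℕ) (g : Fin e → ℕ) (m : ℕ) :
    lastD (Fin.cons u g) m = lastD g u := by
  cases e with
  | zero =>
    rw [lastD_pos (Fin.cons u g) m, lastD_zero]
    simp
  | succ e =>
    rw [lastD_pos, lastD_pos]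
    exact @Fin.cons_succ _ (fun _ => ℕ) u g ⟨e, e.lt_succ_self⟩

lemma chain_eq_F (a b : A) (e : ℕ) : ∀ m : ℕ, 1 ≤ m →
    ∑ g ∈ chainsIcc e 1 m, (∏ j, (g j : ℚ))⁻¹ •
        (b ^ (m - lastD g m) * (a ^ (lastD g m) - b ^ (lastD g m)))
      = Fpoly a b e m := by
  induction e with
  | zero =>
    intro m hm
    have hsingle : chainsIcc 0 1 m = {(Fin.elim0 : Fin 0 → ℕ)} := by
      apply Finset.eq_singleton_iff_unique_mem.mpr
      constructor
      · rw [mem_chainsIcc]; exact ⟨fun i => i.elim0, fun i => i.elim0⟩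
      · intro g _; funext i; exact i.elim0
    rw [hsingle, Finset.sum_singleton]
    have hl : lastD (Fin.elim0 : Fin 0 → ℕ) m = m := by
      simp only [lastD]
      rw [dif_neg (by omega)]
    rw [hl, Nat.sub_self, pow_zero, one_mul]
    simp [Fpoly]
  | succ e ih =>
    intro m hm
    rw [sum_chains_succ]
    show _ = Fpoly a b (e+1) m
    rw [Fpoly]
    refine Finset.sum_congr rfl fun u hu => ?_
    simp only [Finset.mem_Icc] at hu
    rw [← ih u hu.1, Finset.mul_sum, Finset.smul_sum]
    refine Finset.sum_congr rfl fun g hg => ?_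
    have hL : 1 ≤ lastD g u ∧ lastD g u ≤ u := by
      cases e with
      | zero =>
        have : lastD g u = u := by simp only [lastD]; rw [dif_neg (by omega)]
        omega
      | succ e' =>
        rw [mem_chainsIcc] at hg
        have := hg.1 ⟨e', e'.lt_succ_self⟩
        simp only [Finset.mem_Icc] at this
        have hld : lastD g u = g ⟨e', e'.lt_succ_self⟩ := lastD_pos g u
        omega
    have hp : ∏ j : Fin (e+1), ((Fin.cons (α := fun _ => ℕ) u g j : ℕ) : ℚ)
        = (u:ℚ) * ∏ j : Fin e, (g j : ℚ) := by
      rw [Fin.prod_univ_succ]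
      simp
    rw [lastD_cons, hp, mul_inv, mul_smul, mul_smul_comm, smul_smul,
      smul_smul, show m - lastD g u = (m-u) + (u - lastD g u) from by omega, pow_add,
      mul_assoc]

lemma K1 (x y : A) (m : ℕ) : ∀ N : ℕ,
    ∑ i ∈ Finset.range (N+1), (((m+i).choose i : ℚ)) • ((x+y)^(N-i) * y^i)
      = ∑ i ∈ Finset.range (N+1), (((N+m+1).choose (m+1+i) : ℚ)) • (x^i * y^(N-i)) := by
  intro N
  induction N with
  | zero => simp
  | succ N ih =>
    have hL : ∑ i ∈ Finset.range (N+2), (((m+i).choose i : ℚ)) • ((x+y)^(N+1-i) * y^i)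
        = (x+y) * (∑ i ∈ Finset.range (N+1), (((m+i).choose i : ℚ)) • ((x+y)^(N-i) * y^i))
          + ((m+N+1).choose (N+1) : ℚ) • y^(N+1) := by
      rw [Finset.sum_range_succ, Finset.mul_sum]
      congr 1
      · refine Finset.sum_congr rfl fun i hi => ?_
        simp only [Finset.mem_range] at hi
        rw [mul_smul_comm]
        congr 1
        rw [show N+1-i = (N-i)+1 from by omega, pow_succ]
        ring
      · rw [show m+(N+1) = m+N+1 from by omega, Nat.sub_self, pow_zero, one_mul]
    have hR : ∑ i ∈ Finset.range (N+2), (((N+1+m+1).choose (m+1+i) : ℚ)) • (x^i * y^(N+1-i))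
        = (x+y) * (∑ i ∈ Finset.range (N+1), (((N+m+1).choose (m+1+i) : ℚ)) • (x^i * y^(N-i)))
          + ((m+N+1).choose (N+1) : ℚ) • y^(N+1) := by
      have split : ∀ i ∈ Finset.range (N+2),
          (((N+1+m+1).choose (m+1+i) : ℚ)) • (x^i * y^(N+1-i))
            = ((N+m+1).choose (m+i) : ℚ) • (x^i * y^(N+1-i))
              + ((N+m+1).choose (m+1+i) : ℚ) • (x^i * y^(N+1-i)) := by
        intro i _
        rw [← add_smul]
        congr 1
        rw [show N+1+m+1 = (N+m+1)+1 from by omega, show m+1+i = (m+i)+1 from by omega,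
          Nat.choose_succ_succ]
        push_cast
        ring
      rw [Finset.sum_congr rfl split, Finset.sum_add_distrib]
      have hS1 : ∑ i ∈ Finset.range (N+2), ((N+m+1).choose (m+i) : ℚ) • (x^i * y^(N+1-i))
          = x * (∑ i ∈ Finset.range (N+1), (((N+m+1).choose (m+1+i) : ℚ)) • (x^i * y^(N-i)))
            + ((m+N+1).choose (N+1) : ℚ) • y^(N+1) := by
        rw [Finset.sum_range_succ', Finset.mul_sum]
        congr 1
        · refine Finset.sum_congr rfl fun i hi => ?_
          simp only [Finset.mem_range] at hi
          rw [mul_smul_comm, show m+(i+1) = m+1+i from by omega,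
            show N+1-(i+1) = N-i from by omega]
          congr 1
          ring
        · have hc : (N+m+1).choose m = (m+N+1).choose (N+1) := by
            rw [show m+N+1 = N+m+1 from by omega, show N+1 = N+m+1-m from by omega]
            exact (Nat.choose_symm (by omega)).symm
          simp only [Nat.add_zero, pow_zero, one_mul, Nat.sub_zero, hc]
      have hS2 : ∑ i ∈ Finset.range (N+2), ((N+m+1).choose (m+1+i) : ℚ) • (x^i * y^(N+1-i))
          = y * (∑ i ∈ Finset.range (N+1), (((N+m+1).choose (m+1+i) : ℚ)) • (x^i * y^(N-i))) := by
        rw [Finset.sum_range_succ, Nat.choose_eq_zero_of_lt (by omega), Finset.mul_sum]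
        push_cast
        rw [zero_smul, add_zero]
        refine Finset.sum_congr rfl fun i hi => ?_
        simp only [Finset.mem_range] at hi
        rw [mul_smul_comm]
        congr 1
        rw [show N+1-i = (N-i)+1 from by omega, pow_succ]
        ring
      rw [hS1, hS2, add_mul]
      abel
    rw [hL, hR, ih]

end more

theorem depth_one_main_corollary {A : Type*} [CommRing A] [Algebra ℚ A]
    (t x y : A) (s : ℕ) (hs : 1 ≤ s) (n : ℕ) (hn : 1 ≤ n) :
    ∑ k ∈ Finset.Icc 1 n, (n.choose k : ℚ) •
        (x ^ k * y ^ (n - k) * ∑ m ∈ Finset.Icc 1 k, ((m : ℚ) ^ s)⁻¹ • t ^ m)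
      = ∑ f ∈ chainsIcc s 1 n,
          (∏ j ∈ Finset.range s, (idx f (j + 1) : ℚ))⁻¹ •
            ((x + y) ^ (n - idx f 1) * y ^ (idx f 1 - idx f s) *
              ((t * x + y) ^ (idx f s) - y ^ (idx f s))) := by
  obtain ⟨e, rfl⟩ : ∃ e, s = e + 1 := ⟨s - 1, by omega⟩
  set W : (Fin (e+1) → ℕ) → A := fun f =>
    (∏ j : Fin (e+1), (f j : ℚ))⁻¹ •
      ((x + y) ^ (n - f 0) * (y ^ (f 0 - lastD f n) *
        ((t*x+y) ^ (lastD f n) - y ^ (lastD f n)))) with hW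
  have hidx : ∀ f ∈ chainsIcc (e+1) 1 n,
      (∏ j ∈ Finset.range (e+1), (idx f (j + 1) : ℚ))⁻¹ •
        ((x + y) ^ (n - idx f 1) * y ^ (idx f 1 - idx f (e+1)) *
          ((t * x + y) ^ (idx f (e+1)) - y ^ (idx f (e+1)))) = W f := by
    intro f hf
    have h1 : idx f 1 = f 0 := by
      simp only [idx]
      rw [dif_pos (show 1-1 < e+1 by omega)]
      congr 1
    have h2 : idx f (e+1) = lastD f n := by
      simp only [idx]
      rw [dif_pos (show (e+1)-1 < e+1 by omega), lastD_pos]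
      congr 1
    have hprod : ∏ j ∈ Finset.range (e+1), (idx f (j + 1) : ℚ)
        = ∏ j : Fin (e+1), (f j : ℚ) := by
      rw [← Fin.prod_univ_eq_prod_range (fun j => (idx f (j+1) : ℚ)) (e+1)]
      refine Finset.prod_congr rfl fun j _ => ?_
      simp only [idx]
      rw [dif_pos (show (j:ℕ)+1-1 < e+1 from by omega)]
      congr 1
    rw [h1, h2, hprod, hW, mul_assoc]
  rw [Finset.sum_congr rfl hidx, sum_chains_succ e 1 n W]
  have hinner : ∀ u ∈ Finset.Icc 1 n,
      (∑ g ∈ chainsIcc e 1 u, W (Fin.cons u g))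
        = (u:ℚ)⁻¹ • ((x+y)^(n-u) * Fpoly (t*x+y) y e u) := by
    intro u hu
    simp only [Finset.mem_Icc] at hu
    rw [← chain_eq_F (t*x+y) y e u hu.1, Finset.mul_sum, Finset.smul_sum]
    refine Finset.sum_congr rfl fun g hg => ?_
    have hp : ∏ j : Fin (e+1), ((Fin.cons (α := fun _ => ℕ) u g j : ℕ) : ℚ)
        = (u:ℚ) * ∏ j : Fin e, (g j : ℚ) := by
      rw [Fin.prod_univ_succ]
      simp
    simp only [hW, Fin.cons_zero, lastD_cons]
    rw [hp, mul_inv, mul_smul, mul_smul_comm]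
  rw [Finset.sum_congr rfl hinner]
  have hF : ∀ u : ℕ, Fpoly (t*x+y) y e u
      = ∑ k ∈ Finset.Icc 1 u, ((u.choose k : ℚ)/(k:ℚ)^e) • ((t*x)^k * y^(u-k)) := by
    intro u
    rw [Fpoly_closed]
    refine Finset.sum_congr rfl fun k _ => ?_
    rw [show t*x+y-y = t*x from by ring]
  have hdist : ∀ u ∈ Finset.Icc 1 n, (u:ℚ)⁻¹ • ((x+y)^(n-u) * Fpoly (t*x+y) y e u)
      = ∑ k ∈ Finset.Icc 1 u, ((u:ℚ)⁻¹ * ((u.choose k : ℚ)/(k:ℚ)^e)) •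
          ((x+y)^(n-u) * ((t*x)^k * y^(u-k))) := by
    intro u _
    rw [hF u, Finset.mul_sum, Finset.smul_sum]
    refine Finset.sum_congr rfl fun k _ => ?_
    rw [mul_smul_comm, smul_smul]
  rw [Finset.sum_congr rfl hdist,
    sum_Icc_swap n (fun u k => ((u:ℚ)⁻¹ * ((u.choose k : ℚ)/(k:ℚ)^e)) •
      ((x+y)^(n-u) * ((t*x)^k * y^(u-k))))]
  have hLdist : ∀ k ∈ Finset.Icc 1 n,
      (n.choose k : ℚ) • (x ^ k * y ^ (n - k) * ∑ m ∈ Finset.Icc 1 k, ((m : ℚ) ^ (e+1))⁻¹ • t ^ m)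
        = ∑ m ∈ Finset.Icc 1 k, ((n.choose k : ℚ) * ((m:ℚ)^(e+1))⁻¹) •
            (x^k * y^(n-k) * t^m) := by
    intro k _
    rw [Finset.mul_sum, Finset.smul_sum]
    refine Finset.sum_congr rfl fun m _ => ?_
    rw [mul_smul_comm, smul_smul]
  rw [Finset.sum_congr rfl hLdist,
    sum_Icc_swap n (fun k m => ((n.choose k : ℚ) * ((m:ℚ)^(e+1))⁻¹) • (x^k * y^(n-k) * t^m))]
  refine Finset.sum_congr rfl fun mu hmu => ?_
  simp only [Finset.mem_Icc] at hmu
  obtain ⟨m', rfl⟩ : ∃ m'', mu = m'' + 1 := ⟨mu - 1, by omega⟩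
  have hN : n - (m'+1) + (m'+1) = n := by omega
  set N := n - (m'+1) with hNdef
  have hn' : n = N + m' + 1 := by omega
  -- left side
  have hL2 : ∑ k ∈ Finset.Icc (m'+1) n, ((n.choose k : ℚ) * (((m'+1 : ℕ):ℚ)^(e+1))⁻¹) •
        (x^k * y^(n-k) * t^(m'+1))
      = (((m'+1 : ℕ):ℚ)^(e+1))⁻¹ • (t^(m'+1) * (x^(m'+1) *
          ∑ i ∈ Finset.range (N+1), (((N+m'+1).choose (m'+1+i) : ℚ)) • (x^i * y^(N-i)))) := by
    conv_rhs => rw [Finset.mul_sum, Finset.mul_sum, Finset.smul_sum]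
    rw [← Finset.Ico_add_one_right_eq_Icc, Finset.sum_Ico_eq_sum_range,
      show n+1-(m'+1) = N+1 from by omega]
    refine Finset.sum_congr rfl fun i hi => ?_
    simp only [Finset.mem_range] at hi
    rw [mul_smul_comm, mul_smul_comm, smul_smul,
      show n - (m'+1+i) = N - i from by omega,
      show n.choose (m'+1+i) = (N+m'+1).choose (m'+1+i) from by rw [← hn']]
    congr 1
    · ring
    · rw [pow_add]
      ring
  -- right side
  have hR2 : ∑ u ∈ Finset.Icc (m'+1) n, ((u:ℚ)⁻¹ * ((u.choose (m'+1) : ℚ)/((m'+1:ℕ):ℚ)^e)) •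
        ((x+y)^(n-u) * ((t*x)^(m'+1) * y^(u-(m'+1))))
      = (((m'+1 : ℕ):ℚ)^(e+1))⁻¹ • (t^(m'+1) * (x^(m'+1) *
          ∑ i ∈ Finset.range (N+1), (((m'+i).choose i : ℚ)) • ((x+y)^(N-i) * y^i))) := by
    conv_rhs => rw [Finset.mul_sum, Finset.mul_sum, Finset.smul_sum]
    rw [← Finset.Ico_add_one_right_eq_Icc, Finset.sum_Ico_eq_sum_range,
      show n+1-(m'+1) = N+1 from by omega]
    refine Finset.sum_congr rfl fun i hi => ?_
    simp only [Finset.mem_range] at hi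
    have hp : (m'+i+1) * (m'+i).choose m' = (m'+i+1).choose (m'+1) * (m'+1) :=
      Nat.add_one_mul_choose_eq (m'+i) m'
    have hp' : ((m'+i+1 : ℕ):ℚ) * ((m'+i).choose m' : ℚ)
        = ((m'+i+1).choose (m'+1) : ℚ) * ((m'+1:ℕ):ℚ) := by
      exact_mod_cast congrArg (Nat.cast : ℕ → ℚ) hp
    have hsym : (m'+i).choose i = (m'+i).choose m' := by
      rw [← Nat.choose_symm (show m' ≤ m'+i from by omega),
        show m'+i-m' = i from by omega]
    have hcoef : ((m'+1+i : ℕ):ℚ)⁻¹ * (((m'+1+i).choose (m'+1) : ℚ)/((m'+1:ℕ):ℚ)^e)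
        = (((m'+1:ℕ):ℚ)^(e+1))⁻¹ * ((m'+i).choose i : ℚ) := by
      have h1 : ((m'+i+1 : ℕ):ℚ) ≠ 0 := by positivity
      have h2 : ((m'+1:ℕ):ℚ) ≠ 0 := by positivity
      rw [hsym, show m'+1+i = m'+i+1 from by omega]
      have key : ((m'+i+1 : ℕ):ℚ)⁻¹ * ((m'+i+1).choose (m'+1) : ℚ)
          = ((m'+1:ℕ):ℚ)⁻¹ * ((m'+i).choose m' : ℚ) := by
        rw [inv_mul_eq_div, inv_mul_eq_div, div_eq_div_iff h1 h2]
        linear_combination -hp'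
      rw [pow_succ, mul_inv, div_eq_mul_inv]
      linear_combination (((m'+1:ℕ):ℚ)^e)⁻¹ * key
    rw [mul_smul_comm, mul_smul_comm, smul_smul,
      show n - (m'+1+i) = N - i from by omega,
      show m'+1+i-(m'+1) = i from by omega, hcoef]
    congr 1
    rw [mul_pow]
    ring
  rw [hL2, hR2, K1 x y m' N]
end
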